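/- arXiv:math/0503291 — 2 statements merged into one kernel-verified Lean document; each statement's English description precedes it below -/
import Mathlib

section
/- Let μ : ℤ^r → ℤ be a surjective group homomorphism and let ℤ^r act on the Laurent polynomial ring ℤ[λ, λ^{−1}] by m · a = λ^{μ(m)} a. Then for every 1-cocycle α : ℤ^r → ℤ[λ, λ^{−1}] (i.e. α(m+m') = λ^{μ(m)} α(m') + α(m) for all m, m') there exists η ∈ ℤ[λ, λ^{−1}] such that for every m ∈ ℤ^r: α(m) = η · Σ_{ν=0}^{μ(m)−1} λ^ν if μ(m) ≥ 1; α(m) = 0 if μ(m) = 0; and α(m) = −η · Σ_{ν=μ(m)}^{−1} λ^ν if μ(m) ≤ −1. -/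
noncomputable section

/-- The Laurent polynomial ring `ℤ[λ, λ⁻¹]`, i.e. the group ring `ℤ[ℤ]`. -/
abbrev LaurentZ : Type := AddMonoidAlgebra ℤ ℤ

/-- The monomial `λ^u` in `ℤ[λ, λ⁻¹]`. -/
def lam (u : ℤ) : LaurentZ := AddMonoidAlgebra.single u 1

/-- A 1-cocycle for the action `m • a = λ^{μ(m)} a` of `ℤ^r` on `ℤ[λ, λ⁻¹]`. -/
def IsCocycle {r : ℕ} (μ : (Fin r → ℤ) →+ ℤ) (α : (Fin r → ℤ) → LaurentZ) : Prop :=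
  ∀ m m' : Fin r → ℤ, α (m + m') = lam (μ m) * α m' + α m

/-!
Evaluating the cocycle identity on `m + m'` and on `m' + m` gives
`(λ^{μ(m)} - 1) α(m') = (λ^{μ(m')} - 1) α(m)`. Taking `μ(m₀) = 1` and `η = α(m₀)`, this reads
`(λ - 1) α(m) = (λ^{μ(m)} - 1) η`; since `λ - 1` is a non-zero-divisor in the domain `ℤ[λ, λ⁻¹]`,
the formulas follow from the telescoping identity `(λ - 1) Σ_{ν<n} λ^{a+ν} = λ^{a+n} - λ^a`.
-/

theorem lam_add (a b : ℤ) : lam (a + b) = lam a * lam b := by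
  rw [lam, lam, lam, AddMonoidAlgebra.single_mul_single, one_mul]

theorem lam_zero : lam 0 = 1 := rfl

theorem lam_one_sub_one_ne_zero : lam 1 - 1 ≠ 0 := by
  rw [sub_ne_zero, ← lam_zero, lam, lam, Ne, AddMonoidAlgebra.single_left_inj one_ne_zero]
  exact one_ne_zero

theorem sum_range_lam_add_mul_lam_one_sub_one (a : ℤ) (n : ℕ) :
    (∑ ν ∈ Finset.range n, lam (a + ν)) * (lam 1 - 1) = lam (a + n) - lam a := by
  have step : ∀ ν : ℕ, lam (a + ν) * (lam 1 - 1) = lam (a + ↑(ν + 1)) - lam (a + ν) := by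
    intro ν
    rw [mul_sub, mul_one, ← lam_add, Nat.cast_succ, add_assoc]
  rw [Finset.sum_mul, Finset.sum_congr rfl fun ν _ => step ν,
    Finset.sum_range_sub (fun ν : ℕ => lam (a + ν)) n]
  simp

theorem IsCocycle.lam_sub_one_mul_comm {r : ℕ} {μ : (Fin r → ℤ) →+ ℤ}
    {α : (Fin r → ℤ) → LaurentZ} (hα : IsCocycle μ α) (m m' : Fin r → ℤ) :
    (lam (μ m) - 1) * α m' = (lam (μ m') - 1) * α m := by
  have h := hα m m'
  rw [add_comm, hα m' m] at h
  linear_combination -h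

theorem cocycle_structure {r : ℕ} (μ : (Fin r → ℤ) →+ ℤ) (hμ : Function.Surjective μ)
    (α : (Fin r → ℤ) → LaurentZ) (hα : IsCocycle μ α) :
    ∃ η : LaurentZ, ∀ m : Fin r → ℤ,
      (1 ≤ μ m → α m = η * ∑ ν ∈ Finset.range (μ m).toNat, lam (ν : ℤ)) ∧
      (μ m = 0 → α m = 0) ∧
      (μ m ≤ -1 → α m = -(η * ∑ ν ∈ Finset.range (-μ m).toNat, lam (μ m + ν))) := by
  obtain ⟨m₀, hm₀⟩ := hμ 1
  refine ⟨α m₀, fun m => ?_⟩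
  have hcocycle : (lam 1 - 1) * α m = (lam (μ m) - 1) * α m₀ := by
    simpa only [hm₀] using hα.lam_sub_one_mul_comm m₀ m
  refine ⟨fun h => ?_, fun h => ?_, fun h => ?_⟩ <;> apply mul_left_cancel₀ lam_one_sub_one_ne_zero
  · have hs := sum_range_lam_add_mul_lam_one_sub_one 0 (μ m).toNat
    simp only [zero_add, Int.toNat_of_nonneg (by omega : 0 ≤ μ m), lam_zero] at hs
    linear_combination hcocycle - α m₀ * hs
  · rw [hcocycle, h, lam_zero, sub_self, zero_mul, mul_zero]
  · have hs := sum_range_lam_add_mul_lam_one_sub_one (μ m) (-μ m).toNat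
    rw [Int.toNat_of_nonneg (by omega : 0 ≤ -μ m), add_neg_cancel, lam_zero] at hs
    linear_combination hcocycle + α m₀ * hs
end
end

section
/- (Generalized Wronskian criterion.) Let K be a field which is a D-module algebra. Then elements a_1, …, a_n ∈ K are linearly independent over the subfield of constants K^D if and only if there exist h_1, …, h_n ∈ D such that the determinant det( (h_i · a_j)_{i,j} ) of the n×n matrix with entries h_i·a_j ∈ K is nonzero. -/
/-!
Constants commute with the action of `D` (Leibniz rule and the counit axiom), so a relation
`∑ cⱼ aⱼ = 0` with constant `cⱼ` gives `M c = 0` for every matrix `M = (hᵢ • aⱼ)`.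
Conversely, if all these determinants vanish, the `K`-span `W` of the vectors `(g • aⱼ)ⱼ`,
`g ∈ D`, is a proper subspace of `Kⁿ`, and the Leibniz rule makes it `D`-stable. A proper
`D`-stable subspace is annihilated by a nonzero vector of constants, by induction on `n`: either
its image under forgetting the first coordinate is proper, or it is the graph `v₀ = b ⬝ᵥ tail v`
of a linear form, and each `bⱼ` is constant because `d • w - ε(d) w` stays in the subspace with
zero tail for the `w` of tail `eⱼ`. As `a = 1 • a ∈ W`, that vector is a constant relation
among the `aⱼ`.
-/

open scoped TensorProduct

noncomputable section

variable (R D K : Type*) [Field R] [Ring D] [Bialgebra R D]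
  [Field K] [Algebra R K] [Module D K] [IsScalarTower R D K]

/-- Sweedler sum `d ⊗ e ↦ (d • a) * (e • b)` as a linear map on `D ⊗ D`. -/
def measureAux (a b : K) : D ⊗[R] D →ₗ[R] K :=
  TensorProduct.lift <| LinearMap.mk₂ R (fun d e => (d • a) * (e • b))
    (fun d d' e => by
      show ((d + d') • a) * (e • b) = (d • a) * (e • b) + (d' • a) * (e • b)
      rw [add_smul, add_mul])
    (fun r d e => by
      show ((r • d) • a) * (e • b) = r • ((d • a) * (e • b))
      rw [smul_assoc, smul_mul_assoc])
    (fun d e e' => by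
      show (d • a) * ((e + e') • b) = (d • a) * (e • b) + (d • a) * (e' • b)
      rw [add_smul, mul_add])
    (fun r d e => by
      show (d • a) * ((r • e) • b) = r • ((d • a) * (e • b))
      rw [smul_assoc, mul_smul_comm])

/-- `x` is a constant (`D`-invariant): `d • x = ε(d) x` for every `d ∈ D`. -/
def IsConst (x : K) : Prop :=
  ∀ d : D, d • x = (Coalgebra.counit (R := R) d) • x

end

section

open Matrix

variable {R D K : Type*} [Field R] [Ring D] [Bialgebra R D] [Field K] [Algebra R K] [Module D K]

lemma isConst_zero : IsConst R D K 0 := fun d => by rw [smul_zero, smul_zero]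

lemma IsConst.neg {x : K} (hx : IsConst R D K x) : IsConst R D K (-x) := fun d => by
  rw [smul_neg, hx d, smul_neg]

lemma eq_zero_of_mem_of_tail_eq_zero {m : ℕ} {p : Submodule K (Fin (m + 1) → K)} (hp : p ≠ ⊤)
    (htail : p.map (LinearMap.funLeft K K Fin.succ) = ⊤) {x : Fin (m + 1) → K} (hx : x ∈ p)
    (hx_tail : ∀ j : Fin m, x j.succ = 0) : x = 0 := by
  by_contra hx_ne
  have hx0 : x 0 ≠ 0 := fun h => hx_ne (funext fun j => Fin.cases h hx_tail j)
  refine hp (Submodule.eq_top_iff'.2 fun w => ?_)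
  obtain ⟨v, hv, hvw⟩ :=
    Submodule.mem_map.1 (htail.ge (Submodule.mem_top (x := LinearMap.funLeft K K Fin.succ w)))
  have hw : w = v + ((w 0 - v 0) / x 0) • x := by
    funext j
    cases j using Fin.cases with
    | zero => simp [div_mul_cancel₀ _ hx0]
    | succ j => simpa [hx_tail j] using (congrFun hvw j).symm
  rw [hw]
  exact p.add_mem hv (p.smul_mem _ hx)

lemma IsConst.head_of_mem {m : ℕ} {p : Submodule K (Fin (m + 1) → K)}
    (hstab : ∀ (d : D), ∀ v ∈ p, d • v ∈ p)
    (hinj : ∀ x ∈ p, (∀ j : Fin m, x j.succ = 0) → x = 0) {w : Fin (m + 1) → K} (hw : w ∈ p)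
    (hw_tail : ∀ j : Fin m, IsConst R D K (w j.succ)) : IsConst R D K (w 0) := by
  intro d
  have h := hinj (d • w - Coalgebra.counit (R := R) d • w)
    (p.sub_mem (hstab d w hw) (p.smul_of_tower_mem _ hw))
    (fun j => by simp [hw_tail j d])
  simpa [sub_eq_zero] using congrFun h 0

lemma exists_isConst_head_eq_dotProduct_tail (hone : IsConst R D K 1) {m : ℕ}
    {p : Submodule K (Fin (m + 1) → K)} (hstab : ∀ (d : D), ∀ v ∈ p, d • v ∈ p) (hp : p ≠ ⊤)
    (htail : p.map (LinearMap.funLeft K K Fin.succ) = ⊤) :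
    ∃ b : Fin m → K, (∀ j, IsConst R D K (b j)) ∧ ∀ v ∈ p, v 0 = b ⬝ᵥ Fin.tail v := by
  have hinj : ∀ x ∈ p, (∀ j : Fin m, x j.succ = 0) → x = 0 :=
    fun x hx => eq_zero_of_mem_of_tail_eq_zero hp htail hx
  have hbasis : ∀ j : Fin m, ∃ w ∈ p, LinearMap.funLeft K K Fin.succ w = Pi.single j 1 :=
    fun j => Submodule.mem_map.1 (htail ▸ Submodule.mem_top)
  choose w hwp hw_single using hbasis
  have hw_tail : ∀ j i, w j i.succ = Pi.single (M := fun _ => K) j 1 i :=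
    fun j i => congrFun (hw_single j) i
  refine ⟨fun j => w j 0, fun j => IsConst.head_of_mem hstab hinj (hwp j) fun i => ?_,
    fun v hv => ?_⟩
  · rw [hw_tail, Pi.single_apply]
    split_ifs
    exacts [hone, isConst_zero]
  · have h := hinj (v - ∑ j, v j.succ • w j)
      (p.sub_mem hv (Submodule.sum_mem _ fun j _ => p.smul_mem _ (hwp j)))
      (fun i => by simp [hw_tail, Pi.single_apply])
    simpa [sub_eq_zero, dotProduct, Fin.tail, mul_comm] using congrFun h 0

lemma exists_isConst_ne_zero_dotProduct_eq_zero (hone : IsConst R D K 1) :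
    ∀ {m : ℕ} (p : Submodule K (Fin m → K)), (∀ (d : D), ∀ v ∈ p, d • v ∈ p) → p ≠ ⊤ →
      ∃ u : Fin m → K, (∀ j, IsConst R D K (u j)) ∧ u ≠ 0 ∧ ∀ v ∈ p, u ⬝ᵥ v = 0
  | 0, p, _, hp => absurd (Subsingleton.elim p ⊤) hp
  | m + 1, p, hstab, hp => by
    by_cases htail : p.map (LinearMap.funLeft K K Fin.succ) = ⊤
    · obtain ⟨b, hb, hrel⟩ := exists_isConst_head_eq_dotProduct_tail hone hstab hp htail
      refine ⟨vecCons (-1) b, Fin.cases hone.neg hb, fun h => by simpa using congrFun h 0,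
        fun v hv => ?_⟩
      rw [cons_dotProduct, neg_one_mul, neg_add_eq_zero]
      exact hrel v hv
    · obtain ⟨u, hu, hu0, horth⟩ := exists_isConst_ne_zero_dotProduct_eq_zero hone
        (p.map (LinearMap.funLeft K K Fin.succ))
        (by rintro d _ ⟨v, hv, rfl⟩; exact ⟨d • v, hstab d v hv, rfl⟩) htail
      refine ⟨vecCons 0 u, Fin.cases isConst_zero hu,
        fun h => hu0 (funext fun j => by simpa using congrFun h j.succ), fun v hv => ?_⟩
      rw [cons_dotProduct, zero_mul, zero_add]
      exact horth _ (Submodule.mem_map_of_mem hv)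

end

section

open Matrix

variable {R D K : Type*} [Field R] [Ring D] [Bialgebra R D] [Field K] [Algebra R K] [Module D K]
  [IsScalarTower R D K]

@[simp] lemma measureAux_tmul (a b : K) (x y : D) :
    measureAux R D K a b (x ⊗ₜ[R] y) = (x • a) * (y • b) := rfl

lemma measureAux_eq_of_isConst {c : K} (hc : IsConst R D K c) (b : K) (t : D ⊗[R] D) :
    measureAux R D K c b t =
      c * (TensorProduct.lid R D ((Coalgebra.counit (R := R) (A := D)).rTensor D t) • b) := by
  induction t using TensorProduct.induction_on with
  | zero => simp
  | tmul x y =>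
    rw [measureAux_tmul, LinearMap.rTensor_tmul, TensorProduct.lid_tmul, hc x, smul_mul_assoc,
      ← mul_smul_comm, smul_assoc]
  | add t t' ht ht' => rw [map_add, map_add, map_add, ht, ht', add_smul, mul_add]

lemma IsConst.smul_mul
    (hmul : ∀ (d : D) (a b : K),
      d • (a * b) = measureAux R D K a b (Coalgebra.comul (R := R) d))
    {c : K} (hc : IsConst R D K c) (d : D) (b : K) :
    d • (c * b) = c * (d • b) := by
  rw [hmul, measureAux_eq_of_isConst hc, Coalgebra.rTensor_counit_comul, TensorProduct.lid_tmul,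
    one_smul]

lemma mulVec_eq_zero_of_isConst {ι κ : Type*} [Fintype κ]
    (hmul : ∀ (d : D) (a b : K),
      d • (a * b) = measureAux R D K a b (Coalgebra.comul (R := R) d))
    (h : ι → D) {a c : κ → K} (hc : ∀ j, IsConst R D K (c j)) (hca : ∑ j, c j * a j = 0) :
    (Matrix.of fun i j => h i • a j) *ᵥ c = 0 := by
  funext i
  calc ((Matrix.of fun i j => h i • a j) *ᵥ c) i = ∑ j, h i • (c j * a j) := by
        simp only [mulVec, dotProduct, of_apply]
        exact Finset.sum_congr rfl fun j _ => by rw [(hc j).smul_mul hmul, mul_comm]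
    _ = 0 := by rw [← Finset.smul_sum, hca, smul_zero]

lemma smul_smul_mem_of_forall_smul_mem {ι : Type*}
    (hmul : ∀ (d : D) (a b : K),
      d • (a * b) = measureAux R D K a b (Coalgebra.comul (R := R) d))
    {P : Submodule K (ι → K)} {x : ι → K} (hx : ∀ e : D, e • x ∈ P) (c : K) (d : D) :
    d • (c • x) ∈ P := by
  have hP : ∀ t : D ⊗[R] D, (fun j => measureAux R D K c (x j) t) ∈ P := by
    intro t
    induction t using TensorProduct.induction_on with
    | zero => exact P.zero_mem
    | tmul y z => exact P.smul_mem (y • c) (hx z)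
    | add t t' ht ht' => simpa only [map_add, Pi.add_def] using P.add_mem ht ht'
  convert hP (Coalgebra.comul d) using 1
  exact funext fun j => hmul d c (x j)

lemma smul_mem_span_range_smul {ι : Type*}
    (hmul : ∀ (d : D) (a b : K),
      d • (a * b) = measureAux R D K a b (Coalgebra.comul (R := R) d))
    (a : ι → K) (d : D) {v : ι → K} (hv : v ∈ Submodule.span K (Set.range fun g : D => g • a)) :
    d • v ∈ Submodule.span K (Set.range fun g : D => g • a) := by
  induction hv using Submodule.span_induction generalizing d with
  | mem x hx =>
    obtain ⟨g, rfl⟩ := hx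
    exact Submodule.subset_span ⟨d * g, mul_smul d g a⟩
  | zero => simpa only [smul_zero] using Submodule.zero_mem _
  | add x y _ _ hx hy => simpa only [smul_add] using Submodule.add_mem _ (hx d) (hy d)
  | smul c x _ hx => exact smul_smul_mem_of_forall_smul_mem hmul hx c d

end

lemma exists_det_ne_zero_of_span_eq_top {K : Type*} [Field K] {n : ℕ} {S : Set (Fin n → K)}
    (hS : Submodule.span K S = ⊤) :
    ∃ v : Fin n → Fin n → K, (∀ i, v i ∈ S) ∧ (Matrix.of v).det ≠ 0 := by
  obtain ⟨f, hfS, -, hf⟩ := Submodule.exists_fun_fin_finrank_span_eq K S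
  have hcard : Module.finrank K (Submodule.span K S) = n := by
    rw [hS, finrank_top, Module.finrank_fin_fun]
  refine ⟨f ∘ Fin.cast hcard.symm, fun i => hfS _, ?_⟩
  rw [← isUnit_iff_ne_zero, ← Matrix.isUnit_iff_isUnit_det,
    ← Matrix.linearIndependent_rows_iff_isUnit]
  exact hf.comp _ (Fin.cast_injective _)

variable (R D K : Type*) [Field R] [Ring D] [Bialgebra R D]
  [Field K] [Algebra R K] [Module D K] [IsScalarTower R D K]

/-- **Generalized Wronskian criterion** (Takeuchi): elements `a₁, …, aₙ` of a
`D`-module field `K` are linearly independent over the subfield of constants `K^D`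
iff `det((hᵢ • aⱼ)ᵢⱼ) ≠ 0` for some `h₁, …, hₙ ∈ D`. -/
theorem linearIndependent_over_constants_iff_wronskian
    (hone : ∀ d : D, d • (1 : K) = (Coalgebra.counit (R := R) d) • (1 : K))
    (hmul : ∀ (d : D) (a b : K),
      d • (a * b) = measureAux R D K a b (Coalgebra.comul (R := R) d))
    (n : ℕ) (a : Fin n → K) :
    (∀ c : Fin n → K, (∀ i, IsConst R D K (c i)) →
        ∑ i, c i * a i = 0 → ∀ i, c i = 0) ↔
      ∃ h : Fin n → D, (Matrix.of fun i j => (h i) • (a j)).det ≠ 0 := by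
  constructor
  · intro hindep
    by_contra! hdet
    have hspan : Submodule.span K (Set.range fun g : D => g • a) ≠ ⊤ := fun htop => by
      obtain ⟨v, hv, hdet_v⟩ := exists_det_ne_zero_of_span_eq_top htop
      choose g hg using hv
      obtain rfl : v = fun i => g i • a := funext fun i => (hg i).symm
      exact hdet_v (hdet g)
    obtain ⟨u, hu, hu0, horth⟩ := exists_isConst_ne_zero_dotProduct_eq_zero hone _
      (fun d v hv => smul_mem_span_range_smul hmul a d hv) hspan
    exact hu0 (funext (hindep u hu (horth a (Submodule.subset_span ⟨1, one_smul D a⟩))))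
  · rintro ⟨h, hdet⟩ c hc hca
    exact congrFun (Matrix.eq_zero_of_mulVec_eq_zero hdet
      (mulVec_eq_zero_of_isConst hmul h hc hca))
end
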